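/- For all complex numbers A, B with Re(conj(B)·A) = 1, all ε > 0, and all real a, η: the function x ↦ φ₀(A,B,ε²,a,η,x) has L²(ℝ) norm equal to 1, and the function x ↦ (x − a)·φ₀(A,B,ε²,a,η,x) has L²(ℝ) norm equal to ε|A|/√2. -/

import Mathlib

open MeasureTheory

/-- The Gaussian coherent state
`φ₀(A,B,ε²,a,η,x) := π^{-1/4} ε^{-1/2} A^{-1/2}
exp(−B(x−a)²/(2Aε²) + iη(x−a)/ε²)`, written in terms of `eps2 = ε²`
(so `ε^{-1/2} = eps2^{-1/4}`); `A^{-1/2}` uses the principal branch. -/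
noncomputable def phi0 (A B : ℂ) (eps2 : ℝ) (a η x : ℝ) : ℂ :=
  ((Real.pi ^ (-(1 / 4 : ℝ)) * eps2 ^ (-(1 / 4 : ℝ)) : ℝ) : ℂ) *
    A ^ (-(1 / 2) : ℂ) *
    Complex.exp (-(B * (((x - a : ℝ) : ℂ)) ^ 2) / (2 * A * (eps2 : ℂ)) +
      Complex.I * ((η * (x - a) : ℝ) : ℂ) / (eps2 : ℂ))

/-!
Since `Re(B/A) = Re(conj B · A)/|A|² = 1/|A|²`, the squared modulus of the coherent state is
`|φ₀(x)|² = (π ε² |A|²)^{-1/2} exp(-(x-a)²/(ε²|A|²))`, the density of the normal law with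
mean `a` and variance `v = ε²|A|²/2`. Hence `‖φ₀‖₂² = 1` and `‖(x-a) φ₀‖₂² = v`.
-/

open ProbabilityTheory
open scoped NNReal ENNReal ComplexConjugate

section L2NormOfGaussianDensity

variable {α E : Type*} [NormedAddCommGroup E]

lemma eLpNorm_two_eq_ofReal_of_lintegral [MeasurableSpace α] {μ : Measure α} {f : α → E}
    {c : ℝ} (hc : 0 ≤ c) (h : ∫⁻ x, ‖f x‖ₑ ^ 2 ∂μ = ENNReal.ofReal (c ^ 2)) :
    eLpNorm f 2 μ = ENNReal.ofReal c := by
  have hsq : eLpNorm f 2 μ ^ 2 = ∫⁻ x, ‖f x‖ₑ ^ 2 ∂μ := by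
    simpa using eLpNorm_nnreal_pow_eq_lintegral (μ := μ) (f := f) (p := 2) two_ne_zero
  rw [← hsq, ENNReal.ofReal_pow hc] at h
  exact (ENNReal.pow_right_strictMono two_ne_zero).injective h

variable {f : ℝ → E} {μ : ℝ} {v : ℝ≥0}

lemma enorm_sq_eq_gaussianPDF (hf : ∀ x, ‖f x‖ ^ 2 = gaussianPDFReal μ v x) (x : ℝ) :
    ‖f x‖ₑ ^ 2 = gaussianPDF μ v x := by
  rw [gaussianPDF, ← hf, ← ofReal_norm, ENNReal.ofReal_pow (norm_nonneg _)]

lemma eLpNorm_eq_one_of_sq_norm_eq_gaussianPDFReal (hv : v ≠ 0)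
    (hf : ∀ x, ‖f x‖ ^ 2 = gaussianPDFReal μ v x) : eLpNorm f 2 volume = 1 := by
  rw [← ENNReal.ofReal_one]
  refine eLpNorm_two_eq_ofReal_of_lintegral zero_le_one ?_
  simp_rw [enorm_sq_eq_gaussianPDF hf, one_pow, ENNReal.ofReal_one]
  exact lintegral_gaussianPDF_eq_one μ hv

/-- The second moment of `‖f‖²` about `μ` is the variance of the normal law. -/
lemma eLpNorm_sub_smul_eq_sqrt_of_sq_norm_eq_gaussianPDFReal [NormedSpace ℝ E]
    (hv : v ≠ 0) (hf : ∀ x, ‖f x‖ ^ 2 = gaussianPDFReal μ v x) :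
    eLpNorm (fun x => (x - μ) • f x) 2 volume = ENNReal.ofReal (√v) := by
  refine eLpNorm_two_eq_ofReal_of_lintegral (Real.sqrt_nonneg _) ?_
  have hvar := ofReal_variance (X := fun x => x)
    (memLp_id_gaussianReal' (μ := μ) (v := v) 2 ENNReal.ofNat_ne_top)
  rw [variance_fun_id_gaussianReal, evariance, integral_id_gaussianReal,
    gaussianReal_of_var_ne_zero _ hv,
    lintegral_withDensity_eq_lintegral_mul _ (measurable_gaussianPDF μ v) (by fun_prop)] at hvar
  simp_rw [enorm_smul, mul_pow, enorm_sq_eq_gaussianPDF hf, Real.sq_sqrt v.coe_nonneg, hvar,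
    Pi.mul_apply, mul_comm]

end L2NormOfGaussianDensity

lemma Complex.re_div_eq_re_conj_mul_div (A B : ℂ) : (B / A).re = (conj B * A).re / ‖A‖ ^ 2 := by
  rw [Complex.div_re, Complex.sq_norm, Complex.mul_re, Complex.conj_re, Complex.conj_im]
  ring

lemma norm_phi0 (A B : ℂ) {eps2 : ℝ} (heps2 : 0 < eps2) (a η x : ℝ) :
    ‖phi0 A B eps2 a η x‖ = (Real.pi * eps2 * ‖A‖ ^ 2) ^ (-(1 / 4) : ℝ) *
      Real.exp (-((B / A).re * (x - a) ^ 2 / (2 * eps2))) := by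
  have hexp : (-(B * (((x - a : ℝ) : ℂ)) ^ 2) / (2 * A * (eps2 : ℂ)) +
      Complex.I * ((η * (x - a) : ℝ) : ℂ) / (eps2 : ℂ)).re =
      -((B / A).re * (x - a) ^ 2 / (2 * eps2)) := by
    have : -(B * (((x - a : ℝ) : ℂ)) ^ 2) / (2 * A * (eps2 : ℂ)) +
        Complex.I * ((η * (x - a) : ℝ) : ℂ) / (eps2 : ℂ) =
        B / A * ((-((x - a) ^ 2 / (2 * eps2)) : ℝ) : ℂ) +
          ((η * (x - a) / eps2 : ℝ) : ℂ) * Complex.I := by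
      push_cast
      ring
    rw [this, Complex.add_re, Complex.re_mul_ofReal, Complex.mul_I_re, Complex.ofReal_im]
    ring
  rw [phi0, norm_mul, norm_mul, Complex.norm_exp, hexp, Complex.norm_real,
    Real.norm_of_nonneg (by positivity),
    show (-(1 / 2) : ℂ) = ((-(1 / 2) : ℝ) : ℂ) by push_cast; ring, Complex.norm_cpow_real,
    Real.mul_rpow (by positivity) (by positivity), Real.mul_rpow (by positivity) (by positivity),
    ← Real.rpow_natCast ‖A‖ 2, ← Real.rpow_mul (norm_nonneg _)]
  norm_num

lemma sq_norm_phi0 {A B : ℂ} (hAB : (conj B * A).re = 1) {eps2 : ℝ} (heps2 : 0 < eps2)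
    (a η x : ℝ) :
    ‖phi0 A B eps2 a η x‖ ^ 2 = gaussianPDFReal a (eps2 * ‖A‖ ^ 2 / 2).toNNReal x := by
  have hv : ((eps2 * ‖A‖ ^ 2 / 2).toNNReal : ℝ) = eps2 * ‖A‖ ^ 2 / 2 :=
    Real.coe_toNNReal _ (by positivity)
  have hpow : ∀ c : ℝ, 0 ≤ c → (c ^ (-(1 / 4) : ℝ)) ^ 2 = (√c)⁻¹ := fun c hc => by
    rw [← Real.rpow_natCast, ← Real.rpow_mul hc, Real.sqrt_eq_rpow, ← Real.rpow_neg hc]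
    norm_num
  rw [norm_phi0 A B heps2, gaussianPDFReal, hv, Complex.re_div_eq_re_conj_mul_div, hAB, mul_pow,
    hpow _ (by positivity), ← Real.exp_nat_mul]
  congr 2
  · ring_nf
  · push_cast
    field_simp

/-- For all complex `A, B` with `Re(conj B · A) = 1`, all `ε > 0`, and all real `a, η`:
`x ↦ φ₀(A,B,ε²,a,η,x)` has L²(ℝ) norm 1, and `x ↦ (x−a)φ₀(A,B,ε²,a,η,x)` has
L²(ℝ) norm `ε|A|/√2`. -/
theorem stmt_12 (A B : ℂ) (hAB : ((starRingEnd ℂ) B * A).re = 1)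
    (ε : ℝ) (hε : 0 < ε) (a η : ℝ) :
    eLpNorm (fun x : ℝ => phi0 A B (ε ^ 2) a η x) 2 volume = 1 ∧
    eLpNorm (fun x : ℝ => ((x - a : ℝ) : ℂ) * phi0 A B (ε ^ 2) a η x) 2 volume
      = ENNReal.ofReal (ε * ‖A‖ / Real.sqrt 2) := by
  have hA : A ≠ 0 := by rintro rfl; simp at hAB
  have hv : (ε ^ 2 * ‖A‖ ^ 2 / 2).toNNReal ≠ 0 := by
    rw [Ne, Real.toNNReal_eq_zero, not_le]
    positivity
  have hφ := sq_norm_phi0 hAB (pow_pos hε 2) a η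
  refine ⟨eLpNorm_eq_one_of_sq_norm_eq_gaussianPDFReal hv hφ, ?_⟩
  have hsqrt : √((ε ^ 2 * ‖A‖ ^ 2 / 2).toNNReal : ℝ) = ε * ‖A‖ / √2 := by
    rw [Real.coe_toNNReal _ (by positivity), Real.sqrt_div' _ zero_le_two, ← mul_pow,
      Real.sqrt_sq (by positivity)]
  simp_rw [← hsqrt, ← eLpNorm_sub_smul_eq_sqrt_of_sq_norm_eq_gaussianPDFReal hv hφ,
    Complex.real_smul]
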